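/- arXiv:1302.6406 — 6 statements merged into one kernel-verified Lean document; each statement's English description precedes it below -/
import Mathlib

section
/- Let p(z) be a rational function of the form 1/(1-bz)^t where |b - ζ^i| < 1 for some M-th root of unity ζ^i and t ≥ 0. Then 1/(1-bz)^t can be written as a linear combination of functions of the form z^i/(1-az^M)^k with 0 ≤ k, 0 ≤ i < M, and |1-a| < 1, where a = b^M. -/
/-!
Since `ζ ^ i` is a root of unity it has norm `1`, hence `‖b‖ ≤ 1`. In an ultrametric field,
`x ^ M - y ^ M = (x - y) * ∑ x ^ k * y ^ (M - 1 - k)` gives `‖x ^ M - y ^ M‖ ≤ ‖x - y‖` on the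
unit ball, so `‖1 - b ^ M‖ ≤ ‖ζ ^ i - b‖ < 1`; in particular `a = b ^ M ≠ 0`.

For the decomposition, `1 - b z` divides `1 - a z ^ M` with cofactor `Q = ∑_{k < M} (b z) ^ k`,
so `(1 - b z) ^ (-t) = Q ^ t / (1 - a z ^ M) ^ t` with `deg Q ^ t < M (t + 1)`. Every
`P / (1 - a z ^ M) ^ n` with `deg P < M (n + 1)` is a combination of the
`z ^ j / (1 - a z ^ M) ^ k`, `j < M`, `k ≤ n`: dividing `P` by `1 - a z ^ M`, which has degree `M` because `a ≠ 0`, the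
remainder gives the terms with `k = n` and induction applies to the quotient.
-/

section Ultrametric

variable {K : Type*} [NormedField K] [IsUltrametricDist K]

theorem norm_pow_sub_pow_le_norm_sub {x y : K} (hx : ‖x‖ ≤ 1) (hy : ‖y‖ ≤ 1) (n : ℕ) :
    ‖x ^ n - y ^ n‖ ≤ ‖x - y‖ := by
  have hsum : ‖∑ k ∈ Finset.range n, x ^ k * y ^ (n - 1 - k)‖ ≤ 1 :=
    IsUltrametricDist.norm_sum_le_of_forall_le_of_nonneg zero_le_one fun k _ => by
      rw [norm_mul, norm_pow, norm_pow]
      exact mul_le_one₀ (pow_le_one₀ (norm_nonneg x) hx) (by positivity)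
        (pow_le_one₀ (norm_nonneg y) hy)
  calc ‖x ^ n - y ^ n‖ = ‖∑ k ∈ Finset.range n, x ^ k * y ^ (n - 1 - k)‖ * ‖x - y‖ := by
        rw [← norm_mul, geom_sum₂_mul]
    _ ≤ ‖x - y‖ := mul_le_of_le_one_left (norm_nonneg _) hsum

theorem norm_one_sub_pow_lt_one {u b : K} {n : ℕ} (hu : u ^ n = 1) (hn : n ≠ 0)
    (hb : ‖b - u‖ < 1) : ‖1 - b ^ n‖ < 1 := by
  have hu_norm : ‖u‖ = 1 :=
    (isOfFinOrder_iff_pow_eq_one.2 ⟨n, Nat.pos_of_ne_zero hn, hu⟩).norm_eq_one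
  have hb_norm : ‖b‖ ≤ 1 := by
    simpa [hu_norm, hb.le] using IsUltrametricDist.norm_add_le_max (b - u) u
  calc ‖1 - b ^ n‖ = ‖u ^ n - b ^ n‖ := by rw [hu]
    _ ≤ ‖u - b‖ := norm_pow_sub_pow_le_norm_sub hu_norm.le hb_norm n
    _ < 1 := by rwa [norm_sub_rev]

end Ultrametric

open Polynomial

namespace Polynomial

variable {K : Type*} [Field K]

theorem natDegree_div_eq_sub (p : K[X]) {q : K[X]} (hq : q ≠ 0) :
    (p / q).natDegree = p.natDegree - q.natDegree := by
  rw [div_def, natDegree_C_mul (inv_ne_zero (leadingCoeff_ne_zero.2 hq)),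
    natDegree_divByMonic _ (monic_mul_leadingCoeff_inv hq),
    natDegree_mul_C (inv_ne_zero (leadingCoeff_ne_zero.2 hq))]

theorem one_sub_C_mul_X_pow_ne_zero (a : K) {M : ℕ} (hM : M ≠ 0) :
    (1 - C a * X ^ M : K[X]) ≠ 0 :=
  fun h => by simpa [hM] using congrArg (eval 0) h

theorem natDegree_one_sub_C_mul_X_pow {a : K} (ha : a ≠ 0) (M : ℕ) :
    (1 - C a * X ^ M : K[X]).natDegree = M := by
  rcases M.eq_zero_or_pos with rfl | hM
  · rw [pow_zero, mul_one, ← C_1, ← C_sub, natDegree_C]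
  · rw [natDegree_sub_eq_right_of_natDegree_lt] <;> rw [natDegree_C_mul_X_pow _ _ ha]
    simpa using hM

end Polynomial

theorem RatFunc.algebraMap_mul_inv_pow_succ_eq {K : Type*} [Field K] (P : K[X]) {D : K[X]}
    (hD : D ≠ 0) (n : ℕ) :
    algebraMap K[X] (RatFunc K) P * (algebraMap K[X] (RatFunc K) D ^ (n + 1))⁻¹ =
      algebraMap K[X] (RatFunc K) (P / D) * (algebraMap K[X] (RatFunc K) D ^ n)⁻¹ +
        algebraMap K[X] (RatFunc K) (P % D) * (algebraMap K[X] (RatFunc K) D ^ (n + 1))⁻¹ := by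
  have hE : algebraMap K[X] (RatFunc K) D ≠ 0 := RatFunc.algebraMap_ne_zero hD
  conv_lhs => rw [← EuclideanDomain.div_add_mod P D]
  rw [map_add, map_mul]
  field_simp
  ring

theorem RatFunc.algebraMap_one_sub_C_mul_X_pow {K : Type*} [Field K] (a : K) (M : ℕ) :
    algebraMap K[X] (RatFunc K) (1 - Polynomial.C a * Polynomial.X ^ M) = 1 - C a * X ^ M := by
  simp [algebraMap_C, algebraMap_X]

section PartialFractions

variable {K : Type*} [Field K] (a : K) (M : ℕ)

noncomputable def partialFractionSpan (n : ℕ) : Submodule K (RatFunc K) :=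
  Submodule.span K (Set.range fun jk : Fin M × Fin (n + 1) =>
    RatFunc.X ^ (jk.1 : ℕ) * ((1 - RatFunc.C a * RatFunc.X ^ M) ^ (jk.2 : ℕ))⁻¹)

theorem partialFractionSpan_le_succ (n : ℕ) :
    partialFractionSpan a M n ≤ partialFractionSpan a M (n + 1) :=
  Submodule.span_mono <| Set.range_subset_iff.2 fun jk => ⟨(jk.1, jk.2.castSucc), rfl⟩

theorem exists_eq_sum_of_mem_partialFractionSpan {n : ℕ} {f : RatFunc K}
    (hf : f ∈ partialFractionSpan a M n) :
    ∃ c : Fin M → Fin (n + 1) → K, f = ∑ j : Fin M, ∑ k : Fin (n + 1),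
      RatFunc.C (c j k) * RatFunc.X ^ (j : ℕ) *
        ((1 - RatFunc.C a * RatFunc.X ^ M) ^ (k : ℕ))⁻¹ := by
  obtain ⟨c, rfl⟩ := (Submodule.mem_span_range_iff_exists_fun K).1 hf
  refine ⟨fun j k => c (j, k), ?_⟩
  simp only [Fintype.sum_prod_type, RatFunc.smul_eq_C_mul, mul_assoc]

variable {a M}

theorem algebraMap_mul_inv_pow_mem_partialFractionSpan_of_natDegree_lt {S : K[X]}
    (hS : S.natDegree < M) {k n : ℕ} (hk : k ≤ n) :
    algebraMap K[X] (RatFunc K) S * ((1 - RatFunc.C a * RatFunc.X ^ M) ^ k)⁻¹ ∈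
      partialFractionSpan a M n := by
  rw [S.as_sum_range_C_mul_X_pow' hS, map_sum, Finset.sum_mul]
  refine Submodule.sum_mem _ fun j hj => ?_
  rw [map_mul, map_pow, RatFunc.algebraMap_C, RatFunc.algebraMap_X, mul_assoc,
    ← RatFunc.smul_eq_C_mul]
  exact Submodule.smul_mem _ _
    (Submodule.subset_span ⟨(⟨j, Finset.mem_range.1 hj⟩, ⟨k, Nat.lt_succ_of_le hk⟩), rfl⟩)

theorem algebraMap_mul_inv_pow_mem_partialFractionSpan (ha : a ≠ 0) (hM : 0 < M) (n : ℕ)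
    {P : K[X]} (hP : P.natDegree < M * (n + 1)) :
    algebraMap K[X] (RatFunc K) P * ((1 - RatFunc.C a * RatFunc.X ^ M) ^ n)⁻¹ ∈
      partialFractionSpan a M n := by
  induction n generalizing P with
  | zero =>
    exact algebraMap_mul_inv_pow_mem_partialFractionSpan_of_natDegree_lt (by simpa using hP) le_rfl
  | succ n ih =>
    have hD : (1 - C a * X ^ M : K[X]) ≠ 0 := one_sub_C_mul_X_pow_ne_zero a hM.ne'
    have hDdeg := natDegree_one_sub_C_mul_X_pow ha M
    rw [← RatFunc.algebraMap_one_sub_C_mul_X_pow, RatFunc.algebraMap_mul_inv_pow_succ_eq P hD,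
      RatFunc.algebraMap_one_sub_C_mul_X_pow]
    refine add_mem (partialFractionSpan_le_succ a M n (ih ?_))
      (algebraMap_mul_inv_pow_mem_partialFractionSpan_of_natDegree_lt ?_ le_rfl)
    · rw [natDegree_div_eq_sub P hD, hDdeg]
      have : 0 < M * (n + 1) := by positivity
      rw [Nat.mul_succ] at hP
      omega
    · exact (natDegree_mod_lt P (hDdeg.trans_ne hM.ne')).trans_eq hDdeg

theorem inv_one_sub_C_mul_X_pow_mem_partialFractionSpan {b : K} (hb : b ≠ 0) (hM : 0 < M)
    (t : ℕ) : ((1 - RatFunc.C b * RatFunc.X) ^ t)⁻¹ ∈ partialFractionSpan (b ^ M) M t := by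
  set Q : K[X] := ∑ k ∈ Finset.range M, (C b * X) ^ k
  have hfactor : (1 - C b * X) * Q = 1 - C (b ^ M) * X ^ M := by
    rw [mul_neg_geom_sum, mul_pow, C_pow]
  have hQ : Q ≠ 0 :=
    right_ne_zero_of_mul (hfactor ▸ one_sub_C_mul_X_pow_ne_zero (b ^ M) hM.ne')
  have hQdeg : Q.natDegree ≤ M - 1 :=
    natDegree_sum_le_of_forall_le _ _ fun k hk => by
      rw [mul_pow, ← C_pow, natDegree_C_mul_X_pow _ _ (pow_ne_zero k hb)]
      exact Nat.le_sub_one_of_lt (Finset.mem_range.1 hk)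
  have hQtdeg : (Q ^ t).natDegree < M * (t + 1) :=
    calc (Q ^ t).natDegree ≤ t * (M - 1) := natDegree_pow_le.trans (Nat.mul_le_mul_left t hQdeg)
      _ ≤ t * M := Nat.mul_le_mul_left t (Nat.sub_le M 1)
      _ < M * (t + 1) := by rw [mul_comm t, Nat.mul_succ]; omega
  have hE : 1 - RatFunc.C (b ^ M) * RatFunc.X ^ M =
      (1 - RatFunc.C b * RatFunc.X) * algebraMap K[X] (RatFunc K) Q := by
    rw [← RatFunc.algebraMap_one_sub_C_mul_X_pow, ← hfactor, map_mul]
    simp [RatFunc.algebraMap_C, RatFunc.algebraMap_X]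
  have hQ' : algebraMap K[X] (RatFunc K) Q ≠ 0 := RatFunc.algebraMap_ne_zero hQ
  convert algebraMap_mul_inv_pow_mem_partialFractionSpan (pow_ne_zero M hb) hM t hQtdeg using 1
  rw [hE, map_pow, mul_pow, mul_inv, mul_left_comm, mul_inv_cancel₀ (pow_ne_zero t hQ'), mul_one]

end PartialFractions

theorem stmt0_general {K : Type*} [NormedField K]
    (hna : IsNonarchimedean (norm : K → ℝ))
    (M : ℕ) (hM : 0 < M) (ζ : K) (hζ : IsPrimitiveRoot ζ M)
    (b : K) (t : ℕ) (i : ℕ) (hb : ‖b - ζ ^ i‖ < 1) :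
    ‖1 - b ^ M‖ < 1 ∧
    ∃ (n : ℕ) (c : Fin M → Fin (n + 1) → K),
      ((1 - RatFunc.C b * RatFunc.X) ^ t)⁻¹ =
        ∑ j : Fin M, ∑ k : Fin (n + 1),
          RatFunc.C (c j k) * RatFunc.X ^ (j : ℕ) *
            ((1 - RatFunc.C (b ^ M) * RatFunc.X ^ M) ^ (k : ℕ))⁻¹ := by
  have := IsUltrametricDist.isUltrametricDist_of_isNonarchimedean_norm hna
  have hroot : (ζ ^ i) ^ M = 1 := by rw [pow_right_comm, hζ.pow_eq_one, one_pow]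
  have hnorm : ‖1 - b ^ M‖ < 1 := norm_one_sub_pow_lt_one hroot hM.ne' hb
  have hb0 : b ≠ 0 := fun h => by simp [h, hM.ne'] at hnorm
  exact ⟨hnorm, t, exists_eq_sum_of_mem_partialFractionSpan _ _
    (inv_one_sub_C_mul_X_pow_mem_partialFractionSpan hb0 hM t)⟩

/-- over a nonarchimedean normed field (modeling a complete extension of
`ℚ_p` containing a primitive `M`-th root of unity `ζ`), if `|b - ζ^i| < 1` for some
`i < M`, then `1/(1-bz)^t` is a linear combination of functions `z^j/(1-az^M)^k`
with `0 ≤ k`, `0 ≤ j < M` and `|1-a| < 1`, where `a = b^M`. -/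
theorem stmt0 {K : Type*} [NormedField K]
    (hna : IsNonarchimedean (norm : K → ℝ))
    (M : ℕ) (hM : 0 < M) (ζ : K) (hζ : IsPrimitiveRoot ζ M)
    (b : K) (t : ℕ) (i : ℕ) (hi : i < M) (hb : ‖b - ζ ^ i‖ < 1) :
    ‖1 - b ^ M‖ < 1 ∧
    ∃ (n : ℕ) (c : Fin M → Fin (n + 1) → K),
      ((1 - RatFunc.C b * RatFunc.X) ^ t)⁻¹ =
        ∑ j : Fin M, ∑ k : Fin (n + 1),
          RatFunc.C (c j k) * RatFunc.X ^ (j : ℕ) *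
            ((1 - RatFunc.C (b ^ M) * RatFunc.X ^ M) ^ (k : ℕ))⁻¹ :=
  stmt0_general hna M hM ζ hζ b t i hb
end

section
/- Fix integers k ≥ 1, 0 ≤ i < M, and a ∈ C_p with |1-a| < 1. Write z^i/(1-az^M)^k = Σ_{n≥0} a_n z^n as a power series, so that a_{i+Mn} = C(n+k-1, k-1) a^n and a_n = 0 otherwise. For N ≥ 0 define c_N := sup_{n ∈ ℕ} |a_n − a_{n|_N}|, where n|_N is the unique integer with 0 < n|_N ≤ M p^N and M p^N divides n − n|_N. Then lim_{N→∞} c_N = 0. -/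
/-!
The coefficients at `n + 1` and at `n|_N + 1` either both vanish or are `C(j + k - 1, k - 1) α^j`
and `C(j' + k - 1, k - 1) α^j'` with `j = j' + p^N t`. Their difference is
`(C(j + k - 1, k - 1) - C(j' + k - 1, k - 1)) α^j + C(j' + k - 1, k - 1) α^j' ((α^(p^N))^t - 1)`.
Multiplied by `(k - 1)!`, the first bracket becomes a difference of rising factorials at arguments
congruent mod `p^N`, so its norm is at most `|p|^N / |(k - 1)!|`, where `|(k - 1)!| ≠ 0` because
`|p| < 1` forces characteristic zero. In the second, `|α^(p^N) - 1|` decays geometrically, since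
the binomial theorem gives `|x^p - 1| ≤ |x - 1| · max(|p|, |x - 1|^(p-1))`.
-/

open Filter Topology Finset IsUltrametricDist

lemma Nat.exists_eq_add_mul_of_add_mul_eq {M i m s j : ℕ} (hi : i < M) (hm : 0 < m)
    (h : m + M * s = i + M * j) : ∃ j', m = i + M * j' ∧ j = j' + s := by
  have hsj : s ≤ j := Nat.lt_succ_iff.mp <| Nat.lt_of_mul_lt_mul_left (a := M) (by
    rw [Nat.mul_succ]; omega)
  obtain ⟨j', rfl⟩ := Nat.exists_eq_add_of_le' hsj
  exact ⟨j', by rw [Nat.mul_add] at h; omega, rfl⟩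

section Ultrametric

variable {K : Type*} [NormedField K] [IsUltrametricDist K]

lemma norm_pow_sub_one_le_norm_sub_one {x : K} (hx : ‖x‖ ≤ 1) (t : ℕ) :
    ‖x ^ t - 1‖ ≤ ‖x - 1‖ := by
  rw [← geom_sum_mul, norm_mul]
  refine mul_le_of_le_one_left (norm_nonneg _) ?_
  refine norm_sum_le_of_forall_le_of_nonneg zero_le_one fun j _ => ?_
  rw [norm_pow]
  exact pow_le_one₀ (norm_nonneg _) hx

lemma norm_pow_prime_sub_one_le {p : ℕ} (hp : p.Prime) {x : K} (hx : ‖x - 1‖ ≤ 1) :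
    ‖x ^ p - 1‖ ≤ ‖x - 1‖ * max ‖(p : K)‖ (‖x - 1‖ ^ (p - 1)) := by
  have hexpand : x ^ p - 1 = ∑ j ∈ range p, (x - 1) ^ (j + 1) * (p.choose (j + 1) : K) := by
    have h := add_pow (x - 1) 1 p
    rw [sub_add_cancel] at h
    simp [h, sum_range_succ']
  rw [hexpand]
  refine norm_sum_le_of_forall_le_of_nonneg (by positivity) fun j hj => ?_
  rw [norm_mul, norm_pow]
  rcases (show j + 1 ≤ p from mem_range.mp hj).eq_or_lt with hjp | hjp
  · rw [hjp, Nat.choose_self, Nat.cast_one, norm_one, mul_one,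
      ← Nat.sub_add_cancel hp.one_le, pow_succ', Nat.add_sub_cancel]
    exact mul_le_mul_of_nonneg_left (le_max_right _ _) (norm_nonneg _)
  · obtain ⟨m, hm⟩ := hp.dvd_choose_self j.succ_ne_zero hjp
    have hchoose : ‖(p.choose (j + 1) : K)‖ ≤ ‖(p : K)‖ := by
      rw [hm, Nat.cast_mul, norm_mul]
      exact mul_le_of_le_one_right (norm_nonneg _) (norm_natCast_le_one K m)
    calc ‖x - 1‖ ^ (j + 1) * ‖(p.choose (j + 1) : K)‖ ≤ ‖x - 1‖ * ‖(p : K)‖ :=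
          mul_le_mul (pow_le_of_le_one (norm_nonneg _) hx j.succ_ne_zero) hchoose
            (norm_nonneg _) (norm_nonneg _)
      _ ≤ ‖x - 1‖ * max ‖(p : K)‖ (‖x - 1‖ ^ (p - 1)) :=
          mul_le_mul_of_nonneg_left (le_max_left _ _) (norm_nonneg _)

lemma norm_pow_prime_pow_sub_one_le {p : ℕ} (hp : p.Prime) {x : K} (hx : ‖x - 1‖ ≤ 1)
    (N : ℕ) : ‖x ^ p ^ N - 1‖ ≤ ‖x - 1‖ * max ‖(p : K)‖ (‖x - 1‖ ^ (p - 1)) ^ N := by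
  set q := max ‖(p : K)‖ (‖x - 1‖ ^ (p - 1))
  have hq1 : q ≤ 1 := max_le (norm_natCast_le_one K p) (pow_le_one₀ (norm_nonneg _) hx)
  induction N with
  | zero => simp
  | succ N ih =>
    have hle : ‖x ^ p ^ N - 1‖ ≤ ‖x - 1‖ :=
      ih.trans (mul_le_of_le_one_right (norm_nonneg _) (pow_le_one₀ (by positivity) hq1))
    have hstep := norm_pow_prime_sub_one_le hp (hle.trans hx)
    rw [← pow_mul, ← pow_succ] at hstep
    refine hstep.trans ?_
    rw [pow_succ, ← mul_assoc]
    exact mul_le_mul ih (max_le_max le_rfl (pow_le_pow_left₀ (norm_nonneg _) hle _))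
      (by positivity) (by positivity)

lemma norm_natCast_sub_natCast_le_of_modEq {a b d : ℕ} (h : a ≡ b [MOD d]) :
    ‖(a : K) - b‖ ≤ ‖(d : K)‖ := by
  obtain ⟨w, hw⟩ := Nat.modEq_iff_dvd.mp h.symm
  have hcast : (a : K) - b = d * w := by simpa using congrArg (Int.cast : ℤ → K) hw
  rw [hcast, norm_mul]
  exact mul_le_of_le_one_right (norm_nonneg _) (norm_intCast_le_one K w)

lemma norm_natCast_eq_one_of_coprime {p m : ℕ} (hp : ‖(p : K)‖ < 1) (h : p.Coprime m) :
    ‖(m : K)‖ = 1 := by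
  have hbezout : (p : K) * p.gcdA m + m * p.gcdB m = 1 := by
    simpa [h] using (congrArg (Int.cast : ℤ → K) (Nat.gcd_eq_gcd_ab p m)).symm
  refine le_antisymm (norm_natCast_le_one K m) (le_of_not_gt fun hm => ?_)
  have : ‖(1 : K)‖ < 1 := by
    rw [← hbezout]
    refine (norm_add_le_max _ _).trans_lt (max_lt ?_ ?_) <;> rw [norm_mul]
    · exact (mul_le_of_le_one_right (norm_nonneg _) (norm_intCast_le_one K _)).trans_lt hp
    · exact (mul_le_of_le_one_right (norm_nonneg _) (norm_intCast_le_one K _)).trans_lt hm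
  simp at this

lemma charZero_of_norm_natCast_lt_one {p : ℕ} (hp : p.Prime) (h0 : (p : K) ≠ 0)
    (h1 : ‖(p : K)‖ < 1) : CharZero K := by
  refine charZero_of_inj_zero fun n hn => by_contra fun hn0 => ?_
  obtain ⟨e, m, hpm, rfl⟩ := Nat.exists_eq_pow_mul_and_not_dvd hn0 p hp.ne_one
  have hm := norm_natCast_eq_one_of_coprime h1 ((hp.coprime_iff_not_dvd).mpr hpm)
  rw [Nat.cast_mul, Nat.cast_pow, mul_eq_zero] at hn
  rcases hn with hn | hn
  · exact h0 (pow_eq_zero_iff'.mp hn).1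
  · simp [hn] at hm

lemma ascFactorial_add_mul_modEq (n d t k : ℕ) :
    (n + d * t).ascFactorial k ≡ n.ascFactorial k [MOD d] := by
  rw [← ZMod.natCast_eq_natCast_iff, ← ascPochhammer_nat_eq_natCast_ascFactorial,
    ← ascPochhammer_nat_eq_natCast_ascFactorial]
  simp

lemma norm_choose_add_mul_sub_choose_le [CharZero K] (n d t k : ℕ) :
    ‖((n + d * t + k).choose k : K) - ((n + k).choose k : K)‖
      ≤ ‖(d : K)‖ / ‖(k.factorial : K)‖ := by
  have hfac : 0 < ‖(k.factorial : K)‖ :=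
    norm_pos_iff.mpr (Nat.cast_ne_zero.mpr k.factorial_ne_zero)
  have hmul : (k.factorial : K) * (((n + d * t + k).choose k : K) - ((n + k).choose k : K))
      = ((n + d * t + 1).ascFactorial k : K) - ((n + 1).ascFactorial k : K) := by
    rw [Nat.ascFactorial_eq_factorial_mul_choose, Nat.ascFactorial_eq_factorial_mul_choose]
    push_cast
    ring
  have hmod := ascFactorial_add_mul_modEq (n + 1) d t k
  rw [add_right_comm] at hmod
  rw [le_div_iff₀ hfac, mul_comm, ← norm_mul, hmul]
  exact norm_natCast_sub_natCast_le_of_modEq hmod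

lemma norm_choose_mul_pow_sub_le [CharZero K] {p : ℕ} (hp : p.Prime) {α : K} (hα : ‖α‖ ≤ 1)
    (k j t N : ℕ) :
    ‖((j + p ^ N * t + k).choose k : K) * α ^ (j + p ^ N * t) - ((j + k).choose k : K) * α ^ j‖
      ≤ max (‖(p : K)‖ ^ N / ‖(k.factorial : K)‖)
        (‖α - 1‖ * max ‖(p : K)‖ (‖α - 1‖ ^ (p - 1)) ^ N) := by
  have hpow : ∀ s, ‖α ^ s‖ ≤ 1 := fun s => by rw [norm_pow]; exact pow_le_one₀ (norm_nonneg _) hα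
  have hα1 : ‖α - 1‖ ≤ 1 := by
    rw [sub_eq_add_neg]; exact (norm_add_le_max _ _).trans (by simp [hα])
  have hsplit : ((j + p ^ N * t + k).choose k : K) * α ^ (j + p ^ N * t)
      - ((j + k).choose k : K) * α ^ j
      = (((j + p ^ N * t + k).choose k : K) - ((j + k).choose k : K)) * α ^ (j + p ^ N * t)
        + ((j + k).choose k : K) * α ^ j * ((α ^ p ^ N) ^ t - 1) := by
    rw [← pow_mul, pow_add]; ring
  rw [hsplit]
  refine (norm_add_le_max _ _).trans (max_le_max ?_ ?_) <;> rw [norm_mul]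
  · refine mul_le_of_le_one_right (norm_nonneg _) (hpow _) |>.trans ?_
    simpa using norm_choose_add_mul_sub_choose_le (K := K) j (p ^ N) t k
  · rw [norm_mul]
    refine (mul_le_of_le_one_left (norm_nonneg _)
      (mul_le_one₀ (norm_natCast_le_one K _) (norm_nonneg _) (hpow j))).trans ?_
    exact (norm_pow_sub_one_le_norm_sub_one (hpow _) t).trans
      (norm_pow_prime_pow_sub_one_le hp hα1 N)

lemma norm_coeff_sub_coeff_mod_le [CharZero K] {p : ℕ} (hp : p.Prime) {M i k : ℕ} (hi : i < M)
    {α : K} (hα : ‖α‖ ≤ 1) {c : ℕ → K}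
    (hc1 : ∀ n, c (i + M * n) = ((n + k).choose k : K) * α ^ n)
    (hc2 : ∀ m, (∀ n, m ≠ i + M * n) → c m = 0) (N n : ℕ) :
    ‖c (n + 1) - c (n % (M * p ^ N) + 1)‖
      ≤ max (‖(p : K)‖ ^ N / ‖(k.factorial : K)‖)
        (‖α - 1‖ * max ‖(p : K)‖ (‖α - 1‖ ^ (p - 1)) ^ N) := by
  have hdecomp : n + 1 = n % (M * p ^ N) + 1 + M * (p ^ N * (n / (M * p ^ N))) := by
    have := Nat.mod_add_div n (M * p ^ N)
    rw [← mul_assoc]; omega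
  by_cases hres : ∃ j, n + 1 = i + M * j
  · obtain ⟨j, hj⟩ := hres
    obtain ⟨j', hj', rfl⟩ :=
      Nat.exists_eq_add_mul_of_add_mul_eq hi (by omega) (hdecomp.symm.trans hj)
    rw [hj, hj', hc1, hc1]
    exact norm_choose_mul_pow_sub_le hp hα k j' _ N
  · push Not at hres
    have hmod : ∀ j', n % (M * p ^ N) + 1 ≠ i + M * j' := fun j' hj' =>
      hres (j' + p ^ N * (n / (M * p ^ N))) (by rw [hdecomp, hj', mul_add, add_assoc])
    rw [hc2 _ hres, hc2 _ hmod, sub_zero, norm_zero]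
    exact le_max_of_le_left (by positivity)
end Ultrametric

theorem stmt1_general (p : ℕ) (hp : p.Prime) {K : Type*} [NormedField K]
    (hna : IsNonarchimedean (norm : K → ℝ)) (hpK : ‖(p : K)‖ = (p : ℝ)⁻¹)
    (M k i : ℕ) (hi : i < M)
    (α : K) (hα : ‖1 - α‖ < 1)
    (c : ℕ → K)
    (hc1 : ∀ n : ℕ, c (i + M * n) = (Nat.choose (n + k - 1) (k - 1) : K) * α ^ n)
    (hc2 : ∀ m : ℕ, (∀ n : ℕ, m ≠ i + M * n) → c m = 0) :
    Tendsto (fun N : ℕ => ⨆ n : ℕ, ‖c (n + 1) - c ((n % (M * p ^ N)) + 1)‖)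
      atTop (𝓝 0) := by
  have : IsUltrametricDist K := isUltrametricDist_of_isNonarchimedean_norm hna
  have hp0 : 0 < ‖(p : K)‖ := by rw [hpK]; exact inv_pos.mpr (by exact_mod_cast hp.pos)
  have hp1 : ‖(p : K)‖ < 1 := by
    rw [hpK]; exact inv_lt_one_of_one_lt₀ (by exact_mod_cast hp.one_lt)
  have : CharZero K := charZero_of_norm_natCast_lt_one hp (norm_pos_iff.mp hp0) hp1
  have hα' : ‖α - 1‖ < 1 := by rwa [norm_sub_rev]
  have hα1 : ‖α‖ ≤ 1 :=
    (by simpa using norm_add_le_max (α - 1) 1 : ‖α‖ ≤ max ‖α - 1‖ 1).trans (max_le hα'.le le_rfl)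
  have hq : max ‖(p : K)‖ (‖α - 1‖ ^ (p - 1)) < 1 :=
    max_lt hp1 (pow_lt_one₀ (norm_nonneg _) hα' (by have := hp.two_le; omega))
  -- for `k = 0` both sides have `choose _ 0 = 1`, whatever the truncated subtractions give
  have hc1' : ∀ n, c (i + M * n) = ((n + (k - 1)).choose (k - 1) : K) * α ^ n := fun n => by
    rcases k with _ | k <;> simp [hc1]
  refine squeeze_zero (fun N => Real.iSup_nonneg fun n => norm_nonneg _)
    (fun N => ciSup_le fun n => norm_coeff_sub_coeff_mod_le hp hi hα1 hc1' hc2 N n) ?_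
  simpa using ((tendsto_pow_atTop_nhds_zero_of_lt_one hp0.le hp1).div_const _).max
    ((tendsto_pow_atTop_nhds_zero_of_lt_one (by positivity) hq).const_mul ‖α - 1‖)

/-- Let `c` be the coefficient sequence of `z^i/(1-αz^M)^k`, i.e.
`c (i + M*n) = C(n+k-1, k-1) α^n` and `c m = 0` otherwise, where `|1-α| < 1`.
With `n|_N` the unique integer in `(0, M p^N]` congruent to `n` mod `M p^N`
(so `(n+1)|_N = (n % (M p^N)) + 1`), the quantity
`c_N = sup_{n ≥ 1} |a_n - a_{n|_N}|` tends to `0` as `N → ∞`. -/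
theorem stmt1 (p : ℕ) (hp : p.Prime) {K : Type*} [NormedField K]
    (hna : IsNonarchimedean (norm : K → ℝ)) (hpK : ‖(p : K)‖ = (p : ℝ)⁻¹)
    (M k i : ℕ) (hM : 0 < M) (hMp : ¬ p ∣ M) (hk : 1 ≤ k) (hi : i < M)
    (α : K) (hα : ‖1 - α‖ < 1)
    (c : ℕ → K)
    (hc1 : ∀ n : ℕ, c (i + M * n) = (Nat.choose (n + k - 1) (k - 1) : K) * α ^ n)
    (hc2 : ∀ m : ℕ, (∀ n : ℕ, m ≠ i + M * n) → c m = 0) :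
    Tendsto (fun N : ℕ => ⨆ n : ℕ, ‖c (n + 1) - c ((n % (M * p ^ N)) + 1)‖)
      atTop (𝓝 0) :=
  stmt1_general p hp hna hpK M k i hi α hα c hc1 hc2
end

section
/- Let q(t) be a polynomial over C_p of degree k-1 with all coefficients of absolute value at most α, and let a ∈ C_p with |a-1| < 1. Define d_N := sup_{t ≥ 0, s ≥ 1} |q(t + s p^N) a^{s p^N} − q(t)|. Then lim_{N→∞} d_N = 0. -/
open Filter Topology

section Aux

variable {K : Type*} [NormedField K]

/-- norms of natural number casts are at most 1. -/
lemma aux_nat_le_one (hna : IsNonarchimedean (norm : K → ℝ)) (n : ℕ) : ‖(n : K)‖ ≤ 1 := by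
  haveI : IsUltrametricDist K :=
    IsUltrametricDist.isUltrametricDist_of_isNonarchimedean_norm hna
  exact IsUltrametricDist.norm_natCast_le_one K n

/-- geometric sum bound: if `‖y‖ ≤ 1` then `‖y^s - 1‖ ≤ ‖y - 1‖`. -/
lemma aux_pow_sub_one (hna : IsNonarchimedean (norm : K → ℝ)) (y : K) (hy : ‖y‖ ≤ 1) (s : ℕ) : ‖y ^ s - 1‖ ≤ ‖y - 1‖ := by
  haveI : IsUltrametricDist K :=
    IsUltrametricDist.isUltrametricDist_of_isNonarchimedean_norm hna
  rw [← geom_sum_mul, norm_mul]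
  calc ‖∑ i ∈ Finset.range s, y ^ i‖ * ‖y - 1‖ ≤ 1 * ‖y - 1‖ := by
        apply mul_le_mul_of_nonneg_right _ (norm_nonneg _)
        exact IsUltrametricDist.norm_sum_le_of_forall_le_of_nonneg zero_le_one
          (fun i _ => by rw [norm_pow]; exact pow_le_one₀ (norm_nonneg _) hy)
    _ = ‖y - 1‖ := one_mul _

end Aux

/-- let `q` be a polynomial of degree `k-1` over a nonarchimedean normed
field (modeling `ℂ_p`) with all coefficients of norm at most `α`, and `|a-1| < 1`.
Then `d_N := sup_{t ≥ 0, s ≥ 1} |q(t + s p^N) a^{s p^N} − q(t)| → 0` as `N → ∞`. -/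
theorem stmt3 (p : ℕ) (hp : p.Prime) {K : Type*} [NormedField K]
    (hna : IsNonarchimedean (norm : K → ℝ)) (hpK : ‖(p : K)‖ = (p : ℝ)⁻¹)
    (k : ℕ) (hk : 1 ≤ k) (q : Polynomial K) (hdeg : q.natDegree = k - 1)
    (α : ℝ) (hcoeff : ∀ j : ℕ, ‖q.coeff j‖ ≤ α)
    (a : K) (ha : ‖a - 1‖ < 1) :
    Tendsto (fun N : ℕ =>
        ⨆ ts : ℕ × ℕ,
          ‖Polynomial.eval (((ts.1 + (ts.2 + 1) * p ^ N : ℕ) : K)) q *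
              a ^ ((ts.2 + 1) * p ^ N) -
            Polynomial.eval ((ts.1 : K)) q‖)
      atTop (𝓝 0) := by
  haveI : IsUltrametricDist K :=
    IsUltrametricDist.isUltrametricDist_of_isNonarchimedean_norm hna
  have hp1 : (1 : ℝ) < p := by exact_mod_cast hp.one_lt
  have hp0 : (0 : ℝ) < p := lt_trans one_pos hp1
  set r : ℝ := max ‖a - 1‖ (p : ℝ)⁻¹ with hr_def
  have hr0 : 0 ≤ r := le_max_of_le_right (by positivity)
  have hr1 : r < 1 := max_lt ha (by rw [inv_lt_one_iff₀]; right; exact hp1)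
  have hα : 0 ≤ α := le_trans (norm_nonneg _) (hcoeff 0)
  have ha1 : ‖a‖ ≤ 1 := by
    have := hna (a - 1) 1
    simpa [sub_add_cancel] using this.trans (max_le (le_of_lt ha) (by simp))
  -- ‖a^(p^N) - 1‖ ≤ ‖a-1‖ * r^N
  have hapow : ∀ N : ℕ, ‖a ^ p ^ N - 1‖ ≤ ‖a - 1‖ * r ^ N := by
    intro N
    induction N with
    | zero => simp
    | succ N ih =>
      set c : K := a ^ p ^ N with hc_def
      have hc1 : ‖c‖ ≤ 1 := by
        rw [hc_def, norm_pow]; exact pow_le_one₀ (norm_nonneg _) ha1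
      have hcr : ‖c - 1‖ ≤ r := by
        refine ih.trans ?_
        calc ‖a - 1‖ * r ^ N ≤ ‖a - 1‖ * 1 :=
              mul_le_mul_of_nonneg_left (pow_le_one₀ hr0 hr1.le) (norm_nonneg _)
          _ = ‖a - 1‖ := mul_one _
          _ ≤ r := le_max_left _ _
      have hsum : ‖∑ i ∈ Finset.range p, c ^ i‖ ≤ r := by
        have hsplit : ∑ i ∈ Finset.range p, c ^ i
            = (∑ i ∈ Finset.range p, (c ^ i - 1)) + (p : K) := by
          rw [Finset.sum_sub_distrib]
          simp
        rw [hsplit]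
        refine (hna _ _).trans (max_le ?_ ?_)
        · exact IsUltrametricDist.norm_sum_le_of_forall_le_of_nonneg hr0
            (fun i _ => (aux_pow_sub_one hna c hc1 i).trans hcr)
        · rw [hpK]; exact le_max_right _ _
      have hkey : a ^ p ^ (N + 1) - 1 = (∑ i ∈ Finset.range p, c ^ i) * (c - 1) := by
        rw [geom_sum_mul, hc_def, ← pow_mul, ← pow_succ]
      rw [hkey, norm_mul, pow_succ]
      calc ‖∑ i ∈ Finset.range p, c ^ i‖ * ‖c - 1‖ ≤ r * (‖a - 1‖ * r ^ N) :=
            mul_le_mul hsum ih (norm_nonneg _) hr0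
        _ = ‖a - 1‖ * (r ^ N * r) := by ring
  -- ‖a^m - 1‖ ≤ r^N for m = (s+1) * p^N
  have ham : ∀ N s : ℕ, ‖a ^ ((s + 1) * p ^ N) - 1‖ ≤ r ^ N := by
    intro N s
    have h1 : a ^ ((s + 1) * p ^ N) = (a ^ p ^ N) ^ (s + 1) := by
      rw [← pow_mul, mul_comm]
    rw [h1]
    refine (aux_pow_sub_one hna _ ?_ (s + 1)).trans ?_
    · rw [norm_pow]; exact pow_le_one₀ (norm_nonneg _) ha1
    · refine (hapow N).trans ?_
      calc ‖a - 1‖ * r ^ N ≤ 1 * r ^ N :=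
            mul_le_mul_of_nonneg_right ha.le (pow_nonneg hr0 N)
        _ = r ^ N := one_mul _
  -- ‖q.eval (n : K)‖ ≤ α
  have heval : ∀ n : ℕ, ‖Polynomial.eval ((n : ℕ) : K) q‖ ≤ α := by
    intro n
    rw [Polynomial.eval_eq_sum_range]
    refine IsUltrametricDist.norm_sum_le_of_forall_le_of_nonneg hα (fun i _ => ?_)
    rw [norm_mul, norm_pow]
    calc ‖q.coeff i‖ * ‖((n : ℕ) : K)‖ ^ i ≤ α * 1 :=
          mul_le_mul (hcoeff i) (pow_le_one₀ (norm_nonneg _) (aux_nat_le_one hna n))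
            (pow_nonneg (norm_nonneg _) i) hα
      _ = α := mul_one _
  -- ‖q.eval (t+m) - q.eval t‖ ≤ α * ‖(m : K)‖
  have hdiff : ∀ t m : ℕ, ‖Polynomial.eval (((t + m : ℕ) : K)) q
      - Polynomial.eval ((t : ℕ) : K) q‖ ≤ α * ‖((m : ℕ) : K)‖ := by
    intro t m
    set x : K := ((t + m : ℕ) : K) with hx_def
    set y : K := ((t : ℕ) : K) with hy_def
    have hxy : x - y = ((m : ℕ) : K) := by rw [hx_def, hy_def]; push_cast; ring
    rw [Polynomial.eval_eq_sum_range, Polynomial.eval_eq_sum_range, ← Finset.sum_sub_distrib]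
    refine IsUltrametricDist.norm_sum_le_of_forall_le_of_nonneg
      (by positivity) (fun i _ => ?_)
    have hterm : q.coeff i * x ^ i - q.coeff i * y ^ i
        = q.coeff i * ((∑ j ∈ Finset.range i, x ^ j * y ^ (i - 1 - j)) * ((m : ℕ) : K)) := by
      rw [← hxy, geom_sum₂_mul, mul_sub]
    rw [hterm, norm_mul, norm_mul]
    have hgs : ‖∑ j ∈ Finset.range i, x ^ j * y ^ (i - 1 - j)‖ ≤ 1 := by
      refine IsUltrametricDist.norm_sum_le_of_forall_le_of_nonneg zero_le_one (fun j _ => ?_)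
      rw [norm_mul, norm_pow, norm_pow, hx_def, hy_def]
      exact mul_le_one₀ (pow_le_one₀ (norm_nonneg _) (aux_nat_le_one hna _))
        (pow_nonneg (norm_nonneg _) _)
        (pow_le_one₀ (norm_nonneg _) (aux_nat_le_one hna _))
    calc ‖q.coeff i‖ * (‖∑ j ∈ Finset.range i, x ^ j * y ^ (i - 1 - j)‖ * ‖((m : ℕ) : K)‖)
        ≤ α * (1 * ‖((m : ℕ) : K)‖) := by
          refine mul_le_mul (hcoeff i) ?_ (by positivity) hα
          exact mul_le_mul_of_nonneg_right hgs (norm_nonneg _)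
      _ = α * ‖((m : ℕ) : K)‖ := by rw [one_mul]
  -- norm of m = (s+1)*p^N
  have hmnorm : ∀ N s : ℕ, ‖(((s + 1) * p ^ N : ℕ) : K)‖ ≤ r ^ N := by
    intro N s
    push_cast
    rw [norm_mul, norm_pow, hpK]
    calc ‖((s : K) + 1)‖ * ((p : ℝ)⁻¹) ^ N ≤ 1 * r ^ N := by
          refine mul_le_mul ?_ (pow_le_pow_left₀ (by positivity) (le_max_right _ _) N)
            (by positivity) zero_le_one
          exact_mod_cast aux_nat_le_one hna (s + 1)
      _ = r ^ N := one_mul _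
  -- main pointwise bound
  have hbound : ∀ N : ℕ, ∀ ts : ℕ × ℕ,
      ‖Polynomial.eval (((ts.1 + (ts.2 + 1) * p ^ N : ℕ) : K)) q *
          a ^ ((ts.2 + 1) * p ^ N) - Polynomial.eval ((ts.1 : K)) q‖ ≤ α * r ^ N := by
    intro N ⟨t, s⟩
    set m : ℕ := (s + 1) * p ^ N with hm_def
    set X : K := Polynomial.eval (((t + m : ℕ) : K)) q with hX_def
    set Y : K := Polynomial.eval ((t : K)) q with hY_def
    have hYcast : Y = Polynomial.eval (((t : ℕ) : K)) q := rfl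
    have hsplit : X * a ^ m - Y = (X - Y) * a ^ m + Y * (a ^ m - 1) := by ring
    simp only [hsplit]
    refine (hna _ _).trans (max_le ?_ ?_)
    · rw [norm_mul, norm_pow]
      calc ‖X - Y‖ * ‖a‖ ^ m ≤ (α * ‖((m : ℕ) : K)‖) * 1 := by
            refine mul_le_mul ?_ (pow_le_one₀ (norm_nonneg _) ha1)
              (pow_nonneg (norm_nonneg _) _) (by positivity)
            rw [hX_def, hYcast]
            exact hdiff t m
        _ = α * ‖((m : ℕ) : K)‖ := mul_one _
        _ ≤ α * r ^ N := mul_le_mul_of_nonneg_left (hmnorm N s) hα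
    · rw [norm_mul]
      refine mul_le_mul ?_ (ham N s) (norm_nonneg _) hα
      rw [hYcast]; exact heval t
  -- conclude via squeeze
  have hbdd : ∀ N : ℕ, BddAbove (Set.range fun ts : ℕ × ℕ =>
      ‖Polynomial.eval (((ts.1 + (ts.2 + 1) * p ^ N : ℕ) : K)) q *
          a ^ ((ts.2 + 1) * p ^ N) - Polynomial.eval ((ts.1 : K)) q‖) := by
    intro N
    exact ⟨α * r ^ N, Set.forall_mem_range.2 (hbound N)⟩
  refine squeeze_zero (fun N => ?_) (fun N => ciSup_le (hbound N)) ?_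
  · exact le_trans (norm_nonneg _) (le_ciSup (hbdd N) ((0, 0) : ℕ × ℕ))
  · have := (tendsto_pow_atTop_nhds_zero_of_lt_one hr0 hr1).const_mul α
    simpa using this
end

section
/- For every prime p and every k ≥ 0, the p-adic absolute value of the Bernoulli number B_k satisfies |B_k|_p ≤ p. -/
/-! By von Staudt–Clausen, `B_{2m}` differs from an integer by a sum of terms `1/q` over primes `q`,
each of `p`-adic norm at most `p`, so the ultrametric inequality bounds `‖B_{2m}‖`. The odd Bernoulli
numbers vanish except `B_1 = -1/2`, whose norm is bounded the same way. -/

open Finset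

lemma Padic.norm_inv_natCast_le_of_squarefree {p : ℕ} [hp : Fact p.Prime] {n : ℕ}
    (hn : Squarefree n) : ‖(n : ℚ_[p])⁻¹‖ ≤ p := by
  rw [norm_inv]
  by_cases hpn : p ∣ n
  · obtain ⟨m, rfl⟩ := hpn
    have hpm : p.Coprime m := (Nat.Prime.coprime_iff_not_dvd hp.out).2 fun ⟨r, hr⟩ =>
      hp.out.not_isUnit (hn p ⟨r, by rw [hr, mul_assoc]⟩)
    rw [Nat.cast_mul, norm_mul, norm_p, norm_natCast_eq_one_iff.2 hpm, mul_one, inv_inv]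
  · rw [norm_natCast_eq_one_iff.2 ((Nat.Prime.coprime_iff_not_dvd hp.out).2 hpn), inv_one]
    exact_mod_cast hp.out.one_le

lemma Padic.norm_bernoulli_two_mul_le (p : ℕ) [Fact p.Prime] (m : ℕ) :
    ‖((bernoulli (2 * m) : ℚ) : ℚ_[p])‖ ≤ p := by
  obtain ⟨z, hz⟩ := Bernoulli.vonStaudt_clausen m
  rw [eq_sub_of_add_eq hz.symm, sub_eq_add_neg]
  push_cast
  refine (IsUltrametricDist.norm_add_le_max _ _).trans (max_le ?_ ?_)
  · exact (norm_int_le_one z).trans (mod_cast (Fact.out : p.Prime).one_le)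
  · rw [norm_neg]
    refine IsUltrametricDist.norm_sum_le_of_forall_le_of_nonneg (by positivity) fun q hq => ?_
    simpa using norm_inv_natCast_le_of_squarefree (mem_filter.1 hq).2.1.prime.squarefree

/-- von Staudt–Clausen bound: for every prime `p` and `k ≥ 0`,
`|B_k|_p ≤ p`, where `B_k` is the `k`-th Bernoulli number (EGF `x/(e^x−1)`). -/
theorem stmt10 (p : ℕ) [Fact p.Prime] (k : ℕ) :
    ‖((bernoulli k : ℚ) : ℚ_[p])‖ ≤ (p : ℝ) := by
  obtain ⟨m, rfl | rfl⟩ := Nat.even_or_odd' k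
  · exact Padic.norm_bernoulli_two_mul_le p m
  rcases m.eq_zero_or_pos with rfl | hm
  · simpa [bernoulli_one] using
      Padic.norm_inv_natCast_le_of_squarefree (p := p) Nat.prime_two.prime.squarefree
  · rw [bernoulli_eq_zero_of_odd (odd_two_mul_add_one m) (by omega)]
    simp
end

section
/- Let p(x) = Σ_{j≥0} a_j x^j be a power series over Q_p(ζ) with a_j p^{j(1−ε)} → 0 for some ε > 0 (i.e. convergent on a disk of radius > |p|). Define b_l := Σ_{k≥0} (a_{l+k−1} (pM)^{k−1} / (l+k)) C(l+k, k) (−1)^k B_k for l ≥ 1, where B_k are Bernoulli numbers. Then b_l p^{l(1−ε/2)} → 0; in particular q(x) := Σ_{l≥1} b_l x^l converges on a disk of radius strictly greater than |p|. -/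
/-!
Everything is estimated term by term: in an ultrametric field the norm of a series, summable or
not, is bounded by any common bound of its terms. For the `k`-th summand of `b_l`:
`|a_{l+k-1}| ≤ C p^{(l+k-1)(1-ε)}`, `|(pM)^{k-1}| = p^{1-k}`, `|1/(l+k)| ≤ l+k` (the `p`-part of
`l+k` is at most `l+k`), `|C(l+k,k)| ≤ 1`, and `|B_k| ≤ p` by von Staudt–Clausen. The product is
`C p^{1+ε} p^{l(1-ε)} (l+k) p^{-kε} ≤ C p^{1+ε} p^{l(1-ε)} (l + 1/(ε log p))`, and multiplying by
`p^{-l(1-ε/2)}` leaves a constant times `(l + 1/(ε log p)) p^{-lε/2} → 0`.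
-/

open Filter Topology

theorem mul_rpow_neg_mul_le_inv {q ε : ℝ} (hq : 1 < q) (hε : 0 < ε) (x : ℝ) :
    x * q ^ (-(x * ε)) ≤ (ε * Real.log q)⁻¹ := by
  have hlog : 0 < Real.log q := Real.log_pos hq
  have hexp : q ^ (-(x * ε)) = Real.exp (-(x * (ε * Real.log q))) := by
    rw [Real.rpow_def_of_pos (by linarith)]; ring_nf
  rw [hexp]
  calc x * Real.exp (-(x * (ε * Real.log q)))
      = x * (ε * Real.log q) * Real.exp (-(x * (ε * Real.log q))) / (ε * Real.log q) := by
        field_simp [hlog.ne']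
    _ ≤ Real.exp (-1) / (ε * Real.log q) := by gcongr; exact Real.mul_exp_neg_le_exp_neg_one _
    _ ≤ 1 / (ε * Real.log q) := by gcongr; exact Real.exp_le_one_iff.2 (by norm_num)
    _ = (ε * Real.log q)⁻¹ := one_div _

theorem tendsto_add_const_mul_pow_nhds_zero {r : ℝ} (hr : |r| < 1) (D : ℝ) :
    Tendsto (fun n : ℕ => (n + D) * r ^ n) atTop (𝓝 0) := by
  simpa [add_mul] using (tendsto_self_mul_const_pow_of_abs_lt_one hr).add
    ((tendsto_pow_atTop_nhds_zero_of_abs_lt_one hr).const_mul D)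

section Ultrametric

variable {K : Type*} [NormedField K] [IsUltrametricDist K] {p : ℕ}

theorem norm_natCast_eq_one_of_not_dvd (hp : p.Prime) (hpK : ‖(p : K)‖ < 1) {m : ℕ}
    (hm : ¬ p ∣ m) : ‖(m : K)‖ = 1 := by
  refine le_antisymm (IsUltrametricDist.norm_natCast_le_one K m) (not_lt.1 fun hm1 => ?_)
  obtain ⟨u, v, huv⟩ := Nat.isCoprime_iff_coprime.2 ((hp.coprime_iff_not_dvd).2 hm)
  have hsmall (z : ℤ) {x : K} (hx : ‖x‖ < 1) : ‖(z : K) * x‖ < 1 := by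
    rw [norm_mul]
    exact (mul_le_of_le_one_left (norm_nonneg x)
      (IsUltrametricDist.norm_intCast_le_one K z)).trans_lt hx
  have hbezout : (u : K) * p + v * m = 1 := by
    simpa using congrArg (Int.cast : ℤ → K) huv
  have := (IsUltrametricDist.norm_add_le_max _ _).trans_lt (max_lt (hsmall u hpK) (hsmall v hm1))
  rw [hbezout, norm_one] at this
  exact this.false

theorem norm_inv_natCast_eq (hp : p.Prime) (hpK : ‖(p : K)‖ = (p : ℝ)⁻¹) {n : ℕ} (hn : n ≠ 0) :
    ‖(n : K)⁻¹‖ = (p : ℝ) ^ n.factorization p := by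
  have hpK1 : ‖(p : K)‖ < 1 := hpK ▸ inv_lt_one_of_one_lt₀ (by exact_mod_cast hp.one_lt)
  have hunit : ‖((ordCompl[p] n : ℕ) : K)‖ = 1 :=
    norm_natCast_eq_one_of_not_dvd hp hpK1 (Nat.not_dvd_ordCompl hp hn)
  conv_lhs => rw [← Nat.ordProj_mul_ordCompl_eq_self n p]
  rw [Nat.cast_mul, Nat.cast_pow, norm_inv, norm_mul, norm_pow, hunit, hpK, mul_one, inv_pow,
    inv_inv]

theorem norm_inv_natCast_le_self (hp : p.Prime) (hpK : ‖(p : K)‖ = (p : ℝ)⁻¹) (n : ℕ) :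
    ‖(n : K)⁻¹‖ ≤ n := by
  rcases eq_or_ne n 0 with rfl | hn
  · simp
  rw [norm_inv_natCast_eq hp hpK hn]
  exact_mod_cast Nat.ordProj_le p hn

theorem norm_inv_prime_le (hp : p.Prime) (hpK : ‖(p : K)‖ = (p : ℝ)⁻¹) {q : ℕ} (hq : q.Prime) :
    ‖(q : K)⁻¹‖ ≤ p := by
  rw [norm_inv_natCast_eq hp hpK hq.ne_zero, hq.factorization, Finsupp.single_apply]
  split_ifs
  · rw [pow_one]
  · rw [pow_zero]; exact_mod_cast hp.one_lt.le

theorem norm_bernoulli_le [CharZero K] (hp : p.Prime) (hpK : ‖(p : K)‖ = (p : ℝ)⁻¹) (m : ℕ) :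
    ‖((bernoulli m : ℚ) : K)‖ ≤ p := by
  obtain ⟨k, rfl | rfl⟩ := Nat.even_or_odd' m
  · obtain ⟨T, hT⟩ := Bernoulli.vonStaudt_clausen k
    have hB : ((bernoulli (2 * k) : ℚ) : K) = T +
        -∑ q ∈ Finset.range (2 * k + 2) with q.Prime ∧ q - 1 ∣ 2 * k, (q : K)⁻¹ := by
      have := congrArg (Rat.cast : ℚ → K) (eq_sub_of_add_eq hT.symm)
      push_cast at this
      simpa [sub_eq_add_neg] using this
    rw [hB]
    refine (IsUltrametricDist.norm_add_le_max _ _).trans (max_le ?_ ?_)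
    · exact (IsUltrametricDist.norm_intCast_le_one K T).trans (by exact_mod_cast hp.one_lt.le)
    · rw [norm_neg]
      exact IsUltrametricDist.norm_sum_le_of_forall_le_of_nonneg (Nat.cast_nonneg p)
        fun q hq => norm_inv_prime_le hp hpK (Finset.mem_filter.1 hq).2.1
  · rcases eq_or_ne k 0 with rfl | hk
    · simpa [bernoulli_one] using norm_inv_prime_le hp hpK (K := K) Nat.prime_two
    · rw [bernoulli_eq_zero_of_odd (odd_two_mul_add_one k) (by omega)]
      simp

theorem norm_summand_le [CharZero K] (hp : p.Prime) (hpK : ‖(p : K)‖ = (p : ℝ)⁻¹) {M : ℕ}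
    (hMp : ¬ p ∣ M) (x : K) (l k : ℕ) :
    ‖x * ((p : K) * (M : K)) ^ ((k : ℤ) - 1) * ((l + k : ℕ) : K)⁻¹ *
        (Nat.choose (l + k) k : K) * (-1) ^ k * ((bernoulli k : ℚ) : K)‖ ≤
      ‖x‖ * (l + k) * (p : ℝ) ^ (2 - (k : ℝ)) := by
  have hp0 : (0 : ℝ) < p := by exact_mod_cast hp.pos
  have hpM : ‖(p : K) * M‖ = (p : ℝ)⁻¹ := by
    rw [norm_mul, hpK, norm_natCast_eq_one_of_not_dvd hp
      (hpK ▸ inv_lt_one_of_one_lt₀ (by exact_mod_cast hp.one_lt)) hMp, mul_one]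
  have hpow : (p : ℝ)⁻¹ ^ ((k : ℤ) - 1) * p = (p : ℝ) ^ (2 - (k : ℝ)) := by
    rw [inv_zpow', ← zpow_add_one₀ hp0.ne', ← Real.rpow_intCast]
    push_cast
    ring_nf
  have hlk : ‖((l + k : ℕ) : K)⁻¹‖ ≤ l + k := by
    simpa using norm_inv_natCast_le_self hp hpK (K := K) (l + k)
  simp only [norm_mul, norm_zpow, hpM, norm_pow, norm_neg, norm_one, one_pow, mul_one]
  calc ‖x‖ * (p : ℝ)⁻¹ ^ ((k : ℤ) - 1) * ‖((l + k : ℕ) : K)⁻¹‖ * ‖((l + k).choose k : K)‖ *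
        ‖((bernoulli k : ℚ) : K)‖
      ≤ ‖x‖ * (p : ℝ)⁻¹ ^ ((k : ℤ) - 1) * (l + k) * 1 * p := by
        gcongr
        · exact IsUltrametricDist.norm_natCast_le_one K _
        · exact norm_bernoulli_le hp hpK k
    _ = ‖x‖ * (l + k) * (p : ℝ) ^ (2 - (k : ℝ)) := by rw [← hpow]; ring

theorem norm_tsum_summand_le [CharZero K] (hp : p.Prime) (hpK : ‖(p : K)‖ = (p : ℝ)⁻¹)
    {M : ℕ} (hMp : ¬ p ∣ M) {ε C : ℝ} (hε : 0 < ε) {a : ℕ → K}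
    (haC : ∀ j : ℕ, ‖a j‖ ≤ C * (p : ℝ) ^ ((j : ℝ) * (1 - ε)))
    {l : ℕ} (hl : 1 ≤ l) :
    ‖∑' k : ℕ, a (l + k - 1) * ((p : K) * (M : K)) ^ ((k : ℤ) - 1) * ((l + k : ℕ) : K)⁻¹ *
        (Nat.choose (l + k) k : K) * (-1) ^ k * ((bernoulli k : ℚ) : K)‖ ≤
      C * (p : ℝ) ^ (1 + ε) * (p : ℝ) ^ ((l : ℝ) * (1 - ε)) *
        (l + (ε * Real.log p)⁻¹) := by
  have hq : (1 : ℝ) < p := by exact_mod_cast hp.one_lt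
  have hq0 : (0 : ℝ) < p := by linarith
  have hC : 0 ≤ C := by simpa using (norm_nonneg _).trans (haC 0)
  refine IsUltrametricDist.norm_tsum_le_of_forall_le_of_nonneg (by positivity) fun k => ?_
  have hexp : (p : ℝ) ^ (((l + k - 1 : ℕ) : ℝ) * (1 - ε)) * (p : ℝ) ^ (2 - (k : ℝ)) =
      (p : ℝ) ^ (1 + ε) * (p : ℝ) ^ ((l : ℝ) * (1 - ε)) * (p : ℝ) ^ (-((k : ℝ) * ε)) := by
    rw [← Real.rpow_add hq0, ← Real.rpow_add hq0, ← Real.rpow_add hq0, Nat.cast_sub (by omega)]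
    push_cast
    ring_nf
  calc _ ≤ ‖a (l + k - 1)‖ * (l + k) * (p : ℝ) ^ (2 - (k : ℝ)) :=
        norm_summand_le hp hpK hMp _ l k
    _ ≤ C * (p : ℝ) ^ (((l + k - 1 : ℕ) : ℝ) * (1 - ε)) * (l + k) *
          (p : ℝ) ^ (2 - (k : ℝ)) := by
        gcongr
        exact haC _
    _ = C * (p : ℝ) ^ (1 + ε) * (p : ℝ) ^ ((l : ℝ) * (1 - ε)) *
          (l * (p : ℝ) ^ (-((k : ℝ) * ε)) + k * (p : ℝ) ^ (-((k : ℝ) * ε))) := by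
        rw [mul_right_comm _ _ ((p : ℝ) ^ (2 - (k : ℝ))), mul_assoc C, hexp]
        ring
    _ ≤ C * (p : ℝ) ^ (1 + ε) * (p : ℝ) ^ ((l : ℝ) * (1 - ε)) * (l + (ε * Real.log p)⁻¹) := by
        gcongr
        · refine mul_le_of_le_one_right (Nat.cast_nonneg l)
            (Real.rpow_le_one_of_one_le_of_nonpos hq.le ?_)
          have : (0 : ℝ) ≤ k * ε := by positivity
          linarith
        · exact mul_rpow_neg_mul_le_inv hq hε k

end Ultrametric

theorem stmt12_general (p : ℕ) (hp : p.Prime) {K : Type*} [NormedField K]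
    [CharZero K] (hna : IsNonarchimedean (norm : K → ℝ)) (hpK : ‖(p : K)‖ = (p : ℝ)⁻¹)
    (M : ℕ) (hMp : ¬ p ∣ M)
    (ε : ℝ) (hε : 0 < ε)
    (a : ℕ → K)
    (ha : Tendsto (fun j : ℕ => ‖a j‖ * (p : ℝ) ^ (-((j : ℝ) * (1 - ε)))) atTop (𝓝 0))
    (b : ℕ → K)
    (hb : ∀ l : ℕ, 1 ≤ l →
      b l = ∑' k : ℕ,
        a (l + k - 1) * ((p : K) * (M : K)) ^ ((k : ℤ) - 1) * ((l + k : ℕ) : K)⁻¹ *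
          (Nat.choose (l + k) k : K) * (-1) ^ k * ((bernoulli k : ℚ) : K)) :
    Tendsto (fun l : ℕ => ‖b l‖ * (p : ℝ) ^ (-((l : ℝ) * (1 - ε / 2)))) atTop (𝓝 0) := by
  have : IsUltrametricDist K := .isUltrametricDist_of_isNonarchimedean_norm hna
  have hq : (1 : ℝ) < p := by exact_mod_cast hp.one_lt
  have hq0 : (0 : ℝ) < p := by linarith
  obtain ⟨C, hC⟩ := ha.bddAbove_range
  have haC (j : ℕ) : ‖a j‖ ≤ C * (p : ℝ) ^ ((j : ℝ) * (1 - ε)) := by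
    have : ‖a j‖ * (p : ℝ) ^ (-((j : ℝ) * (1 - ε))) ≤ C := hC ⟨j, rfl⟩
    rwa [Real.rpow_neg hq0.le, ← div_eq_mul_inv, div_le_iff₀ (by positivity)] at this
  set r := (p : ℝ) ^ (-(ε / 2))
  have hr : |r| < 1 := by
    rw [abs_of_pos (by positivity)]
    exact Real.rpow_lt_one_of_one_lt_of_neg hq (by linarith)
  have hmajorant := (tendsto_add_const_mul_pow_nhds_zero hr (ε * Real.log p)⁻¹).const_mul
    (C * (p : ℝ) ^ (1 + ε))
  rw [mul_zero] at hmajorant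
  refine squeeze_zero' (.of_forall fun l => by positivity)
    (eventually_atTop.2 ⟨1, fun l hl => ?_⟩) hmajorant
  have hpow : (p : ℝ) ^ ((l : ℝ) * (1 - ε)) * (p : ℝ) ^ (-((l : ℝ) * (1 - ε / 2))) = r ^ l := by
    rw [← Real.rpow_add hq0, ← Real.rpow_natCast, ← Real.rpow_mul hq0.le]
    ring_nf
  calc ‖b l‖ * (p : ℝ) ^ (-((l : ℝ) * (1 - ε / 2)))
      ≤ C * (p : ℝ) ^ (1 + ε) * (p : ℝ) ^ ((l : ℝ) * (1 - ε)) * (l + (ε * Real.log p)⁻¹) *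
          (p : ℝ) ^ (-((l : ℝ) * (1 - ε / 2))) := by
        rw [hb l hl]
        gcongr
        exact norm_tsum_summand_le hp hpK hMp hε haC hl
    _ = C * (p : ℝ) ^ (1 + ε) * ((l + (ε * Real.log p)⁻¹) * r ^ l) := by
        rw [← hpow]
        ring

/-- let `Σ a_j x^j` satisfy `|a_j| p^{-j(1−ε)} → 0` for some `ε > 0`
(convergence on a disk of radius `> |p| = 1/p`). With
`b_l = Σ_{k≥0} a_{l+k−1} (pM)^{k−1} C(l+k,k) (−1)^k B_k / (l+k)`,
one has `|b_l| p^{-l(1−ε/2)} → 0`, so `Σ b_l x^l` converges on a disk of radius `> |p|`. -/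
theorem stmt12 (p : ℕ) (hp : p.Prime) {K : Type*} [NormedField K] [CompleteSpace K]
    [CharZero K] (hna : IsNonarchimedean (norm : K → ℝ)) (hpK : ‖(p : K)‖ = (p : ℝ)⁻¹)
    (M : ℕ) (hM : 0 < M) (hMp : ¬ p ∣ M)
    (ε : ℝ) (hε : 0 < ε)
    (a : ℕ → K)
    (ha : Tendsto (fun j : ℕ => ‖a j‖ * (p : ℝ) ^ (-((j : ℝ) * (1 - ε)))) atTop (𝓝 0))
    (b : ℕ → K)
    (hb : ∀ l : ℕ, 1 ≤ l →
      b l = ∑' k : ℕ,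
        a (l + k - 1) * ((p : K) * (M : K)) ^ ((k : ℤ) - 1) * ((l + k : ℕ) : K)⁻¹ *
          (Nat.choose (l + k) k : K) * (-1) ^ k * ((bernoulli k : ℚ) : K)) :
    Tendsto (fun l : ℕ => ‖b l‖ * (p : ℝ) ^ (-((l : ℝ) * (1 - ε / 2)))) atTop (𝓝 0) :=
  stmt12_general p hp hna hpK M hMp ε hε a ha b hb
end

section
/- Let α be a group-like element of the completed Hopf algebra K⟨⟨e_0, …, e_M⟩⟩ (i.e. Δα = α ⊗̂ α and the constant term of α is 1, where each e_i is primitive), and suppose the coefficient α[e_0] = 0. Then for all a, b ≥ 0 and 1 ≤ i ≤ M: (1) α[e_0^n] = 0 for all n ≥ 1, and (2) α[e_0^a e_i e_0^b] = (−1)^b C(a+b, a) α[e_0^{a+b} e_i]. -/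
/-- The multiset of shuffles of two words. -/
def shuffles {σ : Type*} : List σ → List σ → Multiset (List σ)
  | [], ys => {ys}
  | x :: xs, [] => {x :: xs}
  | x :: xs, y :: ys =>
      (shuffles xs (y :: ys)).map (x :: ·) + (shuffles (x :: xs) ys).map (y :: ·)
  termination_by l₁ l₂ => l₁.length + l₂.length


lemma shuf_nil {σ : Type*} (l : List σ) : shuffles [] l = {l} := by
  cases l <;> simp [shuffles]

lemma shuf_rep {σ : Type*} (x : σ) : ∀ n, shuffles [x] (List.replicate n x)
    = Multiset.replicate (n+1) (List.replicate (n+1) x) := by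
  intro n
  induction n with
  | zero => simp [shuffles]
  | succ n ih =>
      rw [List.replicate_succ, shuffles, ih, shuf_nil]
      simp [Multiset.map_replicate, Multiset.replicate_succ, List.replicate_succ]

lemma shuf_ins {σ : Type*} (x y : σ) (l : List σ) : ∀ a,
    shuffles [x] (List.replicate a x ++ y :: l)
      = Multiset.replicate (a+1) (List.replicate (a+1) x ++ y :: l)
        + (shuffles [x] l).map (fun t => List.replicate a x ++ y :: t) := by
  intro a
  induction a with
  | zero =>
      rw [List.replicate_zero, List.nil_append, shuffles, shuf_nil]
      simp
  | succ a ih =>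
      rw [List.replicate_succ, List.cons_append, shuffles, ih, shuf_nil,
        Multiset.map_add, Multiset.map_map, Multiset.map_replicate]
      simp [Multiset.replicate_succ, List.replicate_succ, Function.comp]

/-- a group-like element `α` of `K⟨⟨e_0, …, e_M⟩⟩` (each `e_i`
primitive) is encoded by its coefficient function on words: `α[∅] = 1` and
`α[u] α[v] = Σ_{w ∈ shuffles of u,v} α[w]` (dual of `Δα = α ⊗̂ α`). If moreover
`α[e_0] = 0`, then `α[e_0^n] = 0` for all `n ≥ 1`, and
`α[e_0^a e_i e_0^b] = (−1)^b C(a+b, a) α[e_0^{a+b} e_i]` for all `a, b ≥ 0` and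
`1 ≤ i ≤ M`. -/
theorem stmt19 {K : Type*} [Field K] [CharZero K] (M : ℕ) (hM : 0 < M)
    (α : List (Fin (M + 1)) → K)
    (hα1 : α [] = 1)
    (hgl : ∀ u v : List (Fin (M + 1)), α u * α v = ((shuffles u v).map α).sum)
    (h0 : α [0] = 0) :
    (∀ n : ℕ, 1 ≤ n → α (List.replicate n 0) = 0) ∧
      ∀ (a b : ℕ) (i : Fin (M + 1)), i ≠ 0 →
        α (List.replicate a 0 ++ i :: List.replicate b 0) =
          (-1 : K) ^ b * (Nat.choose (a + b) a : K) *
            α (List.replicate (a + b) 0 ++ [i]) := by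
  constructor
  · -- part 1
    have key : ∀ n : ℕ, α (List.replicate (n+1) (0 : Fin (M+1))) = 0 := by
      intro n
      induction n with
      | zero => simpa using h0
      | succ n ih =>
          have h := hgl [0] (List.replicate (n+1) 0)
          rw [shuf_rep, h0, ih, Multiset.map_replicate, Multiset.sum_replicate,
            nsmul_eq_mul] at h
          have hn : ((n+1+1 : ℕ) : K) ≠ 0 := Nat.cast_ne_zero.mpr (Nat.succ_ne_zero _)
          rw [zero_mul] at h
          exact (mul_eq_zero.mp h.symm).resolve_left hn
    intro n hn
    obtain ⟨m, rfl⟩ := Nat.exists_eq_add_of_le hn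
    simpa [add_comm] using key m
  · -- part 2
    have key : ∀ a b : ℕ, ∀ i : Fin (M+1),
        ((a+1 : ℕ) : K) * α (List.replicate (a+1) 0 ++ i :: List.replicate b 0)
        + ((b+1 : ℕ) : K) * α (List.replicate a 0 ++ i :: List.replicate (b+1) 0) = 0 := by
      intro a b i
      have h := hgl [0] (List.replicate a 0 ++ i :: List.replicate b 0)
      rw [shuf_ins, h0, shuf_rep] at h
      rw [Multiset.map_add, Multiset.sum_add, Multiset.map_replicate,
        Multiset.sum_replicate, Multiset.map_map, Multiset.map_replicate,
        Multiset.sum_replicate, nsmul_eq_mul, nsmul_eq_mul] at h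
      simp only [Function.comp, zero_mul] at h
      push_cast
      push_cast at h
      linear_combination -h
    have main : ∀ b a : ℕ, ∀ i : Fin (M+1),
        α (List.replicate a 0 ++ i :: List.replicate b 0) =
          (-1 : K) ^ b * (Nat.choose (a + b) a : K) *
            α (List.replicate (a + b) 0 ++ [i]) := by
      intro b
      induction b with
      | zero => intro a i; simp
      | succ b ih =>
          intro a i
          have h := key a b i
          have h2 := ih (a+1) i
          have hb : ((b+1 : ℕ) : K) ≠ 0 := Nat.cast_ne_zero.mpr (Nat.succ_ne_zero _)
          have hrep : a + 1 + b = a + (b + 1) := by ring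
          rw [h2, hrep] at h
          have hch : ((a+b+1).choose (a+1) * (a+1) : ℕ) = ((a+b+1).choose a * (b+1) : ℕ) := by
            rw [Nat.choose_succ_right_eq]
            congr 1
            omega
          have hchK : ((a+b+1).choose (a+1) : K) * ((a+1 : ℕ) : K)
              = ((a+b+1).choose a : K) * ((b+1 : ℕ) : K) := by exact_mod_cast hch
          have hab : a + (b+1) = a + b + 1 := by ring
          rw [hab] at h ⊢
          have : ((b+1 : ℕ) : K) * α (List.replicate a 0 ++ i :: List.replicate (b+1) 0)
              = ((b+1 : ℕ) : K) * ((-1:K)^(b+1) * ((a+b+1).choose a : K)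
                  * α (List.replicate (a+b+1) 0 ++ [i])) := by
            push_cast at h hchK ⊢
            linear_combination h + (-(-1:K)^b * α (List.replicate (a+b+1) 0 ++ [i])) * hchK
          exact mul_left_cancel₀ hb this
    intro a b i _
    exact main b a i
end
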